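/- arXiv:1511.00531 — 6 statements merged into one kernel-verified Lean document; each statement's English description precedes it below -/
import Mathlib

section
/- The two-qubit states ρ₀ and ρ₁ are simultaneously diagonal in the Bell basis: ρ₀ = α₊|Ψ⁺⟩⟨Ψ⁺| + α₋|Ψ⁻⟩⟨Ψ⁻| + (1/4)|Φ⁺⟩⟨Φ⁺| + (1/4)|Φ⁻⟩⟨Φ⁻| and ρ₁ = α₋|Ψ⁺⟩⟨Ψ⁺| + α₊|Ψ⁻⟩⟨Ψ⁻| + (1/4)|Φ⁺⟩⟨Φ⁺| + (1/4)|Φ⁻⟩⟨Φ⁻|, where α± = (1 ± 1/√2)/4. -/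
open Matrix Complex Kronecker BigOperators ComplexOrder

noncomputable section

abbrev Mat2 := Matrix (Fin 2) (Fin 2) ℂ
abbrev Mat4 := Matrix (Fin 2 × Fin 2) (Fin 2 × Fin 2) ℂ

/-- Pauli X matrix -/
def PX : Mat2 := !![0, 1; 1, 0]

/-- Pauli Y matrix -/
def PY : Mat2 := !![0, -Complex.I; Complex.I, 0]

/-- sign (−1)^b for a bit b -/
def bsign (b : Bool) : ℂ := if b then -1 else 1

/-- boolean function f(x̄,ȳ) = (x₁·y₁) XOR x₂ XOR y₂ -/
def fxy (x y : Bool × Bool) : Bool := (((x.1 && y.1)).xor x.2).xor y.2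

/-- qubit input states ω_{x̄}: ω_{(0,x₂)} = (I+(−1)^{x₂}X)/2, ω_{(1,x₂)} = (I+(−1)^{x₂}Y)/2 -/
def omg (x : Bool × Bool) : Mat2 :=
  (1/2 : ℂ) • ((1 : Mat2) + bsign x.2 • (if x.1 then PY else PX))

/-- qubit input states τ_{ȳ} = (I+(−1)^{y₂}(X+(−1)^{y₁}Y)/√2)/2 -/
def tau (y : Bool × Bool) : Mat2 :=
  (1/2 : ℂ) • ((1 : Mat2) + (bsign y.2 / (Real.sqrt 2 : ℂ)) • (PX + bsign y.1 • PY))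

/-- averaged input states ρ₀ (for c = false) and ρ₁ (for c = true) -/
def rho (c : Bool) : Mat4 :=
  (1/8 : ℂ) • ∑ x : Bool × Bool, ∑ y : Bool × Bool,
    (if fxy x y = c then omg x ⊗ₖ tau y else 0)

/-- standard basis vectors of ℂ⁴ ≅ ℂ² ⊗ ℂ² -/
def ket (i j : Fin 2) : (Fin 2 × Fin 2) → ℂ := fun p => if p = (i, j) then 1 else 0

def PhiP : (Fin 2 × Fin 2) → ℂ := fun p => (1 / (Real.sqrt 2 : ℂ)) * (ket 0 0 p + ket 1 1 p)
def PhiM : (Fin 2 × Fin 2) → ℂ := fun p => (1 / (Real.sqrt 2 : ℂ)) * (ket 0 0 p - ket 1 1 p)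
def PsiP : (Fin 2 × Fin 2) → ℂ := fun p => (1 / (Real.sqrt 2 : ℂ)) * (ket 0 1 p + ket 1 0 p)
def PsiM : (Fin 2 × Fin 2) → ℂ := fun p => (1 / (Real.sqrt 2 : ℂ)) * (ket 0 1 p - ket 1 0 p)

/-- rank one projector |v⟩⟨v| -/
def proj (v : (Fin 2 × Fin 2) → ℂ) : Mat4 := Matrix.vecMulVec v (star v)

/-- a γ-admissible measurement triple -/
def Admissible (γ : ℝ) (P0 P1 Pe : Mat4) : Prop :=
  P0.PosSemidef ∧ P1.PosSemidef ∧ Pe.PosSemidef ∧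
  P0 + P1 + Pe = 1 ∧
  ∀ x y : Bool × Bool, ((omg x ⊗ₖ tau y) * Pe).trace = 1 - (γ : ℂ)^2

/-- guessing value V = (1/2)·Tr[ρ₀Π₀ + ρ₁Π₁] (a real number) -/
def Gval (P0 P1 : Mat4) : ℝ := (1/2) * ((rho false * P0 + rho true * P1).trace).re

set_option maxHeartbeats 0

/-- ρ₀ and ρ₁ are simultaneously diagonal in the Bell basis with
eigenvalues α± = (1 ± 1/√2)/4 on |Ψ±⟩ and 1/4 on |Φ±⟩. -/
theorem bell_diagonal_form :
    rho false = ((1 + 1/Real.sqrt 2)/4 : ℝ) • proj PsiP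
        + ((1 - 1/Real.sqrt 2)/4 : ℝ) • proj PsiM
        + (1/4 : ℝ) • proj PhiP + (1/4 : ℝ) • proj PhiM ∧
    rho true = ((1 - 1/Real.sqrt 2)/4 : ℝ) • proj PsiP
        + ((1 + 1/Real.sqrt 2)/4 : ℝ) • proj PsiM
        + (1/4 : ℝ) • proj PhiP + (1/4 : ℝ) • proj PhiM := by
  have hs : ((Real.sqrt 2 : ℝ) : ℂ) ^ 2 = 2 := by
    norm_cast; rw [Real.sq_sqrt]; norm_num
  have hne : ((Real.sqrt 2 : ℝ) : ℂ) ≠ 0 := by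
    intro h; rw [h] at hs; simp at hs
  have hs3 : ((Real.sqrt 2 : ℝ) : ℂ) ^ 3 = 2 * ((Real.sqrt 2 : ℝ) : ℂ) := by
    rw [pow_succ, hs]
  have hs4 : ((Real.sqrt 2 : ℝ) : ℂ) ^ 4 = 4 := by
    rw [show ((Real.sqrt 2 : ℝ) : ℂ) ^ 4 = (((Real.sqrt 2 : ℝ) : ℂ) ^ 2) ^ 2 by ring, hs]
    norm_num
  have hs5 : ((Real.sqrt 2 : ℝ) : ℂ) ^ 5 = 4 * ((Real.sqrt 2 : ℝ) : ℂ) := by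
    rw [pow_succ, hs4]
  have hs6 : ((Real.sqrt 2 : ℝ) : ℂ) ^ 6 = 8 := by
    rw [show ((Real.sqrt 2 : ℝ) : ℂ) ^ 6 = (((Real.sqrt 2 : ℝ) : ℂ) ^ 2) ^ 3 by ring, hs]
    norm_num
  constructor <;>
  · rw [rho]
    simp only [Fintype.sum_prod_type, Fintype.sum_bool]
    norm_num [fxy]
    ext ⟨i, j⟩ ⟨k, l⟩
    fin_cases i <;> fin_cases j <;> fin_cases k <;> fin_cases l <;>
    · simp [omg, tau, proj, PsiP, PsiM, PhiP, PhiM, ket, bsign, PX, PY,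
          Matrix.kroneckerMap_apply, Matrix.vecMulVec,
          Matrix.add_apply, Matrix.smul_apply, Matrix.one_apply,
          Prod.ext_iff, -Prod.mk_zero_zero, -Prod.mk_one_one]
      try field_simp
      try ring_nf
      try simp only [hs, hs3, hs4, hs5, hs6, Complex.I_sq]
      try norm_num
      try ring_nf
end
end

section
/- The difference of the two input-average states satisfies ρ₀ − ρ₁ = (1/(2√2))·(|Ψ⁺⟩⟨Ψ⁺| − |Ψ⁻⟩⟨Ψ⁻|); in particular, every eigenvector of ρ₀ − ρ₁ with nonzero eigenvalue is a maximally entangled Bell state. -/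
/-!
Since (−1)^{f(x̄,ȳ)} = (−1)^{x₁y₁}(−1)^{x₂}(−1)^{y₂}, summing over the parity bits x₂, y₂ first
turns ρ₀ − ρ₁ into the CHSH operator (1/8)·Σ_{x₁,y₁} (−1)^{x₁y₁} A_{x₁} ⊗ B_{y₁}, where A₀ = X,
A₁ = Y and B_{y₁} = (X + (−1)^{y₁}Y)/√2. This equals (√2/8)(X ⊗ X + Y ⊗ Y), and
X ⊗ X + Y ⊗ Y = 2(|Ψ⁺⟩⟨Ψ⁺| − |Ψ⁻⟩⟨Ψ⁻|). As Ψ⁺ and Ψ⁻ are orthonormal, an eigenvector of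
s(|Ψ⁺⟩⟨Ψ⁺| − |Ψ⁻⟩⟨Ψ⁻|) with nonzero eigenvalue is proportional to one of them.
-/

open Matrix Complex Kronecker BigOperators ComplexOrder

noncomputable section

lemma bsign_xor (a b : Bool) : bsign (a.xor b) = bsign a * bsign b := by
  cases a <;> cases b <;> simp [bsign]

lemma bsign_fxy (x y : Bool × Bool) :
    bsign (fxy x y) = bsign (x.1 && y.1) * (bsign x.2 * bsign y.2) := by
  simp only [fxy, bsign_xor, mul_assoc]

lemma sum_bsign_mul_smul_kronecker {l m n p : Type*} (A : Bool → Matrix l m ℂ)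
    (B : Bool → Matrix n p ℂ) :
    ∑ b, ∑ c, (bsign b * bsign c) • (A b ⊗ₖ B c) = (A false - A true) ⊗ₖ (B false - B true) := by
  ext
  simp only [Fintype.sum_bool, bsign, if_true, Bool.false_eq_true, if_false, Matrix.add_apply,
    Matrix.smul_apply, Matrix.sub_apply, kroneckerMap_apply, smul_eq_mul]
  ring

theorem exists_eq_smul_of_eigenvector_vecMulVec_sub_vecMulVec {K n : Type*} [Field K] [StarRing K]
    [CharZero K] [Fintype n] {u w v : n → K} (huu : star u ⬝ᵥ u = 1) (hww : star w ⬝ᵥ w = 1)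
    (huw : star u ⬝ᵥ w = 0) (hwu : star w ⬝ᵥ u = 0) {s μ : K} (hμ : μ ≠ 0)
    (hv : (s • (vecMulVec u (star u) - vecMulVec w (star w))) *ᵥ v = μ • v) :
    (∃ c : K, v = c • u) ∨ ∃ c : K, v = c • w := by
  set a := star u ⬝ᵥ v
  set b := star w ⬝ᵥ v
  have hv' : μ • v = s • (a • u - b • w) := by
    rw [← hv, smul_mulVec, sub_mulVec, vecMulVec_mulVec, vecMulVec_mulVec, op_smul_eq_smul,
      op_smul_eq_smul]
  have ha : μ * a = s * a := by
    simpa [a, dotProduct_smul, dotProduct_sub, huu, huw] using congrArg (star u ⬝ᵥ ·) hv'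
  have hb : μ * b = -s * b := by
    simpa [b, dotProduct_smul, dotProduct_sub, hww, hwu] using congrArg (star w ⬝ᵥ ·) hv'
  have hv_eq : v = (μ⁻¹ * s * a) • u - (μ⁻¹ * s * b) • w := by
    rw [← inv_smul_smul₀ hμ v, hv']
    module
  by_cases hb0 : b = 0
  · exact .inl ⟨μ⁻¹ * s * a, by simpa [hb0] using hv_eq⟩
  · have hs : μ = -s := mul_right_cancel₀ hb0 hb
    have ha0 : a = 0 := by
      have : (2 * μ) * a = 0 := by linear_combination ha + a * hs
      simpa [hμ] using this
    exact .inr ⟨-(μ⁻¹ * s * b), by simpa [ha0, neg_smul] using hv_eq⟩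

lemma inv_sqrt_two_mul_self : (Real.sqrt 2 : ℂ)⁻¹ * (Real.sqrt 2 : ℂ)⁻¹ = 2⁻¹ := by
  rw [← mul_inv, ← Complex.ofReal_mul, Real.mul_self_sqrt zero_le_two, Complex.ofReal_ofNat]

lemma rho_false_sub_rho_true_eq_sum_bsign :
    rho false - rho true = (1/8 : ℂ) • ∑ x, ∑ y, bsign (fxy x y) • (omg x ⊗ₖ tau y) := by
  simp only [rho, ← smul_sub, ← Finset.sum_sub_distrib]
  congr! 3 with x _ y _
  cases fxy x y <;> simp [bsign]

lemma omg_false_sub_omg_true (a : Bool) :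
    omg (a, false) - omg (a, true) = if a then PY else PX := by
  simp only [omg, bsign, Bool.false_eq_true, if_true, if_false]
  module

lemma tau_false_sub_tau_true (b : Bool) :
    tau (b, false) - tau (b, true) = (Real.sqrt 2 : ℂ)⁻¹ • (PX + bsign b • PY) := by
  simp only [tau, bsign, Bool.false_eq_true, if_true, if_false]
  module

lemma rho_false_sub_rho_true_eq_sum_bsign_and :
    rho false - rho true = (1/8 : ℂ) • ∑ a, ∑ b, bsign (a && b) •
      ((if a then PY else PX) ⊗ₖ ((Real.sqrt 2 : ℂ)⁻¹ • (PX + bsign b • PY))) := by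
  rw [rho_false_sub_rho_true_eq_sum_bsign]
  congr 1
  calc ∑ x, ∑ y, bsign (fxy x y) • (omg x ⊗ₖ tau y)
      = ∑ a, ∑ b, bsign (a && b) •
          ∑ c, ∑ d, (bsign c * bsign d) • (omg (a, c) ⊗ₖ tau (b, d)) := by
        simp only [Fintype.sum_prod_type, bsign_fxy, Finset.smul_sum, smul_smul]
        exact Finset.sum_congr rfl fun a _ => Finset.sum_comm
    _ = _ := by
        simp only [sum_bsign_mul_smul_kronecker, omg_false_sub_omg_true, tau_false_sub_tau_true]

lemma sum_bsign_and_smul_pauli_kronecker (r : ℂ) :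
    ∑ a, ∑ b, bsign (a && b) • ((if a then PY else PX) ⊗ₖ (r • (PX + bsign b • PY))) =
      (2 * r) • (PX ⊗ₖ PX + PY ⊗ₖ PY) := by
  simp only [Fintype.sum_bool, bsign, Bool.and_true, Bool.and_false, Bool.false_eq_true,
    if_true, if_false, kronecker_smul, kronecker_add]
  module

lemma PX_kronecker_PX_add_PY_kronecker_PY :
    PX ⊗ₖ PX + PY ⊗ₖ PY = (2 : ℂ) • (proj PsiP - proj PsiM) := by
  ext ⟨i, j⟩ ⟨k, l⟩
  fin_cases i <;> fin_cases j <;> fin_cases k <;> fin_cases l <;>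
    norm_num [PX, PY, proj, vecMulVec, PsiP, PsiM, ket, inv_sqrt_two_mul_self]

lemma rho_false_sub_rho_true_eq_smul_proj_sub_proj :
    rho false - rho true = (1/(2*Real.sqrt 2) : ℝ) • (proj PsiP - proj PsiM) := by
  rw [rho_false_sub_rho_true_eq_sum_bsign_and, sum_bsign_and_smul_pauli_kronecker,
    PX_kronecker_PX_add_PY_kronecker_PY, smul_smul, smul_smul, ← Complex.coe_smul]
  congr 1
  push_cast
  ring

lemma star_PsiP_dotProduct_PsiP : star PsiP ⬝ᵥ PsiP = 1 := by
  norm_num [dotProduct, Fintype.sum_prod_type, PsiP, ket, inv_sqrt_two_mul_self]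

lemma star_PsiM_dotProduct_PsiM : star PsiM ⬝ᵥ PsiM = 1 := by
  norm_num [dotProduct, Fintype.sum_prod_type, PsiM, ket, inv_sqrt_two_mul_self]

lemma star_PsiP_dotProduct_PsiM : star PsiP ⬝ᵥ PsiM = 0 := by
  simp [dotProduct, Fintype.sum_prod_type, PsiP, PsiM, ket]

lemma star_PsiM_dotProduct_PsiP : star PsiM ⬝ᵥ PsiP = 0 := by
  simp [dotProduct, Fintype.sum_prod_type, PsiP, PsiM, ket]

/-- ρ₀ − ρ₁ = (1/(2√2))·(|Ψ⁺⟩⟨Ψ⁺| − |Ψ⁻⟩⟨Ψ⁻|); in particular every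
eigenvector with nonzero eigenvalue is (proportional to) a maximally entangled Bell state. -/
theorem rho_difference :
    rho false - rho true = (1/(2*Real.sqrt 2) : ℝ) • (proj PsiP - proj PsiM) ∧
    ∀ (v : (Fin 2 × Fin 2) → ℂ) (μ : ℂ), μ ≠ 0 → v ≠ 0 →
      (rho false - rho true).mulVec v = μ • v →
      (∃ c : ℂ, v = c • PsiP) ∨ (∃ c : ℂ, v = c • PsiM) := by
  refine ⟨rho_false_sub_rho_true_eq_smul_proj_sub_proj, fun v μ hμ _ hv => ?_⟩
  rw [rho_false_sub_rho_true_eq_smul_proj_sub_proj, ← Complex.coe_smul] at hv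
  exact exists_eq_smul_of_eigenvector_vecMulVec_sub_vecMulVec star_PsiP_dotProduct_PsiP
    star_PsiM_dotProduct_PsiM star_PsiP_dotProduct_PsiM star_PsiM_dotProduct_PsiP hμ hv
end
end

section
/- Both ρ₀ and ρ₁ are positive definite 4×4 matrices (in particular they have full and identical support, so unambiguous discrimination between them is impossible). -/
open Matrix Complex Kronecker BigOperators ComplexOrder

noncomputable section

/-!
Averaging over the sixteen product states with the sign of `f` kills every term except the
identity and the correlations `X ⊗ X`, `Y ⊗ Y`, giving `ρ_c = I/4 + (−1)^c (X⊗X + Y⊗Y)/(8√2)`.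
Both `U = ±X ⊗ X` and `U = ±Y ⊗ Y` are Hermitian involutions, for which
`1 + U = (1 + U)ᴴ (1 + U) / 2 ≥ 0`; hence `ρ_c ≥ (1/4 − 1/(4√2)) I > 0`.
-/

section HermitianInvolution

variable {𝕜 m n : Type*} [RCLike 𝕜]

theorem Matrix.IsHermitian.kronecker {A : Matrix m m 𝕜} {B : Matrix n n 𝕜}
    (hA : A.IsHermitian) (hB : B.IsHermitian) : (A ⊗ₖ B).IsHermitian := by
  rw [IsHermitian, conjTranspose_kronecker, hA.eq, hB.eq]

variable [Fintype m] [DecidableEq m] [Fintype n] [DecidableEq n]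

theorem Matrix.kronecker_mul_self_eq_one {A : Matrix m m 𝕜} {B : Matrix n n 𝕜}
    (hA : A * A = 1) (hB : B * B = 1) : (A ⊗ₖ B) * (A ⊗ₖ B) = 1 := by
  rw [← mul_kronecker_mul, hA, hB, one_kronecker_one]

theorem Matrix.posSemidef_one_add_of_mul_self_eq_one {U : Matrix n n 𝕜}
    (hU : U.IsHermitian) (hU2 : U * U = 1) : (1 + U).PosSemidef := by
  have hsq : (1 + U)ᴴ * (1 + U) = (2 : ℝ) • (1 + U) := by
    rw [conjTranspose_add, conjTranspose_one, hU.eq, add_mul, one_mul, mul_add, mul_one, hU2]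
    module
  have h := (posSemidef_conjTranspose_mul_self (1 + U)).smul (a := (2⁻¹ : ℝ)) (by norm_num)
  rwa [hsq, smul_smul, inv_mul_cancel₀ two_ne_zero, one_smul] at h

theorem Matrix.posDef_smul_one_add_smul_add {U V : Matrix n n 𝕜}
    (hU : U.IsHermitian) (hU2 : U * U = 1) (hV : V.IsHermitian) (hV2 : V * V = 1)
    {a b : ℝ} (hb : 0 ≤ b) (hab : 2 * b < a) : (a • 1 + b • (U + V)).PosDef := by
  have h : a • 1 + b • (U + V) = (a - 2 * b) • (1 : Matrix n n 𝕜) + b • ((1 + U) + (1 + V)) := by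
    module
  rw [h]
  exact (PosDef.one.smul (sub_pos.2 hab)).add_posSemidef
    (((posSemidef_one_add_of_mul_self_eq_one hU hU2).add
      (posSemidef_one_add_of_mul_self_eq_one hV hV2)).smul hb)

end HermitianInvolution

theorem PX_isHermitian : PX.IsHermitian := by
  ext i j; fin_cases i <;> fin_cases j <;> simp [PX]

theorem PY_isHermitian : PY.IsHermitian := by
  ext i j; fin_cases i <;> fin_cases j <;> simp [PY]

theorem PX_mul_self : PX * PX = 1 := by
  ext i j; fin_cases i <;> fin_cases j <;> simp [PX]

theorem PY_mul_self : PY * PY = 1 := by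
  ext i j; fin_cases i <;> fin_cases j <;> simp [PY]

theorem isHermitian_bsign_smul {n : Type*} {A : Matrix n n ℂ} (hA : A.IsHermitian) (c : Bool) :
    (bsign c • A).IsHermitian := by
  cases c <;> simp [bsign, hA]

theorem bsign_smul_mul_self {n : Type*} [Fintype n] (A : Matrix n n ℂ) (c : Bool) :
    (bsign c • A) * (bsign c • A) = A * A := by
  cases c <;> simp [bsign]

theorem rho_eq (c : Bool) :
    rho c = (1 / 4 : ℝ) • (1 : Mat4) +
      (1 / (8 * √2) : ℝ) • ((bsign c • PX) ⊗ₖ PX + (bsign c • PY) ⊗ₖ PY) := by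
  cases c <;>
  · simp only [rho, Fintype.sum_prod_type, Fintype.sum_bool, fxy, omg, tau, bsign,
      Bool.and_true, Bool.and_false, Bool.xor_true, Bool.xor_false, Bool.false_xor, Bool.not_true,
      Bool.not_false, Bool.false_eq_true, Bool.true_eq_false, ↓reduceIte,
      add_kronecker, kronecker_add, smul_kronecker, kronecker_smul, one_kronecker_one]
    module

theorem rho_posDef (c : Bool) : (rho c).PosDef := by
  have hsqrt : 1 < √2 := by
    rw [Real.lt_sqrt zero_le_one]; norm_num
  rw [rho_eq]
  refine posDef_smul_one_add_smul_add
    ((isHermitian_bsign_smul PX_isHermitian c).kronecker PX_isHermitian)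
    (kronecker_mul_self_eq_one (by rw [bsign_smul_mul_self, PX_mul_self]) PX_mul_self)
    ((isHermitian_bsign_smul PY_isHermitian c).kronecker PY_isHermitian)
    (kronecker_mul_self_eq_one (by rw [bsign_smul_mul_self, PY_mul_self]) PY_mul_self)
    (by positivity) ?_
  rw [mul_one_div, div_lt_iff₀ (by positivity)]
  nlinarith

/-- both ρ₀ and ρ₁ are positive definite 4×4 matrices. -/
theorem rho_posdef : (rho false).PosDef ∧ (rho true).PosDef :=
  ⟨rho_posDef false, rho_posDef true⟩
end
end

section
/- (Theorem 1, achievability, high-loss regime.) For every γ ∈ (0, 1/√2], the triple Π₀ = 2γ²|Ψ⁺⟩⟨Ψ⁺|, Π₁ = 2γ²|Ψ⁻⟩⟨Ψ⁻|, Π_∅ = I₄ − Π₀ − Π₁ is γ-admissible and attains V = (1/2)·Tr[ρ₀Π₀ + ρ₁Π₁] = γ²·(1 + 1/√2)/2. -/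
open Matrix Complex Kronecker BigOperators ComplexOrder

noncomputable section

/-!
Since |Ψ⁺⟩⟨Ψ⁺| + |Ψ⁻⟩⟨Ψ⁻| is the projector onto span{|01⟩, |10⟩}, the abstention operator is
Π_∅ = diag(1, 1 − 2γ², 1 − 2γ², 1), which is positive exactly when γ² ≤ 1/2. Every ω_x̄ ⊗ τ_ȳ has
constant diagonal 1/4, so Tr[(ω_x̄ ⊗ τ_ȳ) Π_∅] = 1 − γ² for all inputs.

For the value, ⟨Ψ^±|ω ⊗ τ|Ψ^±⟩ = (1 ± a·b)/4, where a, b are the (equatorial) Bloch vectors of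
ω_x̄ and τ_ȳ, and a·b = (−1)^{f(x̄,ȳ)}/√2. Hence the Bell state announcing the right value f(x̄,ȳ)
(Ψ⁺ for 0, Ψ⁻ for 1) has overlap (1 + 1/√2)/4 with every input, and averaging over the 16 inputs
gives V.
-/

lemma trace_mul_vecMulVec {n R : Type*} [Fintype n] [CommSemiring R] (M : Matrix n n R)
    (u w : n → R) : (M * vecMulVec u w).trace = w ⬝ᵥ M *ᵥ u := by
  rw [mul_vecMulVec, trace_vecMulVec, dotProduct_comm]

lemma two_mul_sq_le_one_of_le_inv_sqrt_two {γ : ℝ} (hγ : 0 < γ) (hγ' : γ ≤ 1 / Real.sqrt 2) :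
    2 * γ ^ 2 ≤ 1 := by
  have := pow_le_pow_left₀ hγ.le hγ' 2
  rw [div_pow, Real.sq_sqrt zero_le_two] at this
  linarith

lemma omg_apply_self (x : Bool × Bool) (i : Fin 2) : omg x i i = 1 / 2 := by
  rcases x with ⟨_ | _, _⟩ <;> fin_cases i <;> simp [omg, PX, PY]

lemma tau_apply_self (y : Bool × Bool) (i : Fin 2) : tau y i i = 1 / 2 := by
  fin_cases i <;> simp [tau, PX, PY]

lemma kronecker_omg_tau_apply_self (x y : Bool × Bool) (p : Fin 2 × Fin 2) :
    (omg x ⊗ₖ tau y) p p = 1 / 4 := by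
  rw [kroneckerMap_apply, omg_apply_self, tau_apply_self]
  norm_num

lemma omg_tau_correlation (x y : Bool × Bool) :
    omg x 0 1 * tau y 1 0 + omg x 1 0 * tau y 0 1 = bsign (fxy x y) / (2 * Real.sqrt 2) := by
  rcases x with ⟨_ | _, _ | _⟩ <;> rcases y with ⟨_ | _, _ | _⟩ <;>
    simp [omg, tau, PX, PY, bsign, fxy] <;> ring_nf <;> simp <;> ring

lemma proj_PsiP_add_proj_PsiM :
    proj PsiP + proj PsiM = diagonal (fun p => if p.1 = p.2 then 0 else 1) := by
  have h : ((Real.sqrt 2 : ℝ) : ℂ) ^ 2 = 2 := by norm_cast; simp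
  ext ⟨i, j⟩ ⟨k, l⟩
  fin_cases i <;> fin_cases j <;> fin_cases k <;> fin_cases l <;>
    simp [proj, vecMulVec, PsiP, PsiM, ket, diagonal] <;> ring_nf <;> simp [h]

lemma one_sub_smul_proj_PsiP_sub_smul_proj_PsiM (c : ℝ) :
    1 - c • proj PsiP - c • proj PsiM =
      diagonal (fun p => if p.1 = p.2 then 1 else 1 - (c : ℂ)) := by
  rw [sub_sub, ← smul_add, proj_PsiP_add_proj_PsiM]
  ext p q
  by_cases hpq : p = q
  · subst hpq
    by_cases hp : p.1 = p.2 <;> simp [hp, Complex.real_smul]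
  · simp [hpq]

lemma trace_kronecker_omg_tau_mul_diagonal (x y : Bool × Bool) (d : Fin 2 × Fin 2 → ℂ) :
    (omg x ⊗ₖ tau y * diagonal d).trace = (∑ p, d p) / 4 := by
  simp only [trace, diag, mul_diagonal, kronecker_omg_tau_apply_self, Finset.sum_div]
  congr! 1 with p
  ring

def bell (c : Bool) : (Fin 2 × Fin 2) → ℂ := if c then PsiM else PsiP

lemma trace_mul_proj_bell (M : Mat4) (c : Bool) :
    (M * proj (bell c)).trace =
      (M (0, 1) (0, 1) + M (1, 0) (1, 0) + bsign c * (M (0, 1) (1, 0) + M (1, 0) (0, 1))) / 2 := by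
  have h : ((Real.sqrt 2 : ℝ) : ℂ) ^ 2 = 2 := by norm_cast; simp
  rw [proj, trace_mul_vecMulVec]
  cases c <;> simp [bell, PsiP, PsiM, ket, dotProduct, mulVec, Fintype.sum_prod_type, bsign] <;>
    ring_nf <;> simp [h] <;> ring

lemma trace_kronecker_omg_tau_mul_proj_bell_fxy (x y : Bool × Bool) :
    (omg x ⊗ₖ tau y * proj (bell (fxy x y))).trace = (((1 + 1 / Real.sqrt 2) / 4 : ℝ) : ℂ) := by
  have hs : bsign (fxy x y) * bsign (fxy x y) = 1 := by cases fxy x y <;> simp [bsign]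
  rw [trace_mul_proj_bell, kronecker_omg_tau_apply_self, kronecker_omg_tau_apply_self]
  simp only [kroneckerMap_apply]
  rw [omg_tau_correlation, mul_div, hs]
  push_cast
  field_simp
  ring

lemma rho_false_mul_add_rho_true_mul (P : Bool → Mat4) :
    rho false * P false + rho true * P true =
      (1 / 8 : ℂ) • ∑ x, ∑ y, omg x ⊗ₖ tau y * P (fxy x y) := by
  simp only [rho, smul_mul_assoc, Finset.sum_mul, ite_mul, zero_mul, ← smul_add,
    ← Finset.sum_add_distrib]
  congr! 3 with x - y -
  cases fxy x y <;> simp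

lemma gval_smul_proj_PsiP_smul_proj_PsiM (c : ℝ) :
    Gval (c • proj PsiP) (c • proj PsiM) = c * (1 + 1 / Real.sqrt 2) / 4 := by
  rw [Gval, show rho false * (c • proj PsiP) + rho true * (c • proj PsiM) = _ from
    rho_false_mul_add_rho_true_mul (fun b => c • proj (bell b))]
  simp only [mul_smul_comm, trace_smul, trace_sum, trace_kronecker_omg_tau_mul_proj_bell_fxy,
    Finset.sum_const, Finset.card_univ, Fintype.card_prod, Fintype.card_bool, nsmul_eq_mul,
    smul_eq_mul, Complex.real_smul]
  norm_cast
  rw [re_mul_ofReal, div_ofNat_re, one_re]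
  ring

/-- achievability, high-loss regime: for γ ∈ (0, 1/√2], the triple
Π₀ = 2γ²|Ψ⁺⟩⟨Ψ⁺|, Π₁ = 2γ²|Ψ⁻⟩⟨Ψ⁻|, Π_∅ = I − Π₀ − Π₁ is γ-admissible and attains
V = γ²·(1 + 1/√2)/2. -/
theorem guessing_achievable_high_loss (γ : ℝ) (hγ : 0 < γ) (hγ' : γ ≤ 1/Real.sqrt 2) :
    Admissible γ ((2*γ^2 : ℝ) • proj PsiP) ((2*γ^2 : ℝ) • proj PsiM)
      (1 - (2*γ^2 : ℝ) • proj PsiP - (2*γ^2 : ℝ) • proj PsiM) ∧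
    Gval ((2*γ^2 : ℝ) • proj PsiP) ((2*γ^2 : ℝ) • proj PsiM)
      = γ^2 * (1 + 1/Real.sqrt 2)/2 := by
  have hγ2 := two_mul_sq_le_one_of_le_inv_sqrt_two hγ hγ'
  refine ⟨⟨(posSemidef_vecMulVec_self_star _).smul (by positivity),
    (posSemidef_vecMulVec_self_star _).smul (by positivity), ?_, by abel, fun x y => ?_⟩, ?_⟩
  · rw [one_sub_smul_proj_PsiP_sub_smul_proj_PsiM, posSemidef_diagonal_iff]
    intro p
    split_ifs
    · exact zero_le_one
    · rw [sub_nonneg]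
      exact_mod_cast hγ2
  · rw [one_sub_smul_proj_PsiP_sub_smul_proj_PsiM, trace_kronecker_omg_tau_mul_diagonal]
    simp only [Fintype.sum_prod_type, Fin.sum_univ_two, Fin.isValue, ↓reduceIte, zero_ne_one,
      one_ne_zero]
    push_cast
    ring
  · rw [gval_smul_proj_PsiP_smul_proj_PsiM]
    ring
end
end

section
/- (Theorem 2, upper bound.) For every γ ∈ (0,1] and every γ-admissible triple (Π₀,Π₁,Π_∅) in which Π₀, Π₁ and Π_∅ are all PPT, the guessing value satisfies V = (1/2)·Tr[ρ₀Π₀ + ρ₁Π₁] ≤ γ²·(2 + 1/√2)/4; equivalently, the normalized guessing probability V/γ² is at most 1/2 + 1/(4√2). -/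
open Matrix Complex Kronecker BigOperators ComplexOrder

noncomputable section

/-- partial transpose over the second tensor factor -/
def ptransB (M : Mat4) : Mat4 := Matrix.of fun p q => M (p.1, q.2) (q.1, p.2)

/-- positivity under partial transpose -/
def IsPPT (M : Mat4) : Prop := M.PosSemidef ∧ (ptransB M).PosSemidef

/-!
Since ρ₀ + ρ₁ = I/2 and ρ₀ − ρ₁ = (|Ψ⁺⟩⟨Ψ⁺| − |Ψ⁻⟩⟨Ψ⁻|)/(2√2), the guessing value is
V = Tr(Π₀ + Π₁)/8 + Tr[(Ψ⁺ − Ψ⁻)(Π₀ − Π₁)]/(8√2). The sixteen product states ω ⊗ τ sum to 4·I,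
so summing the admissibility conditions gives Tr(Π₀ + Π₁) = 4γ². The partial transpose of Ψ^±
is I/2 − Φ^∓, hence for a PPT operator Π the overlap ⟨Ψ^±|Π|Ψ^±⟩ = Tr Π/2 − ⟨Φ^∓|Π^{T_B}|Φ^∓⟩
is at most Tr Π/2. The second term of V is therefore at most 2γ²/(8√2), and V ≤ γ²/2 + γ²/(4√2).
-/

theorem Matrix.sum_kronecker_sum {ι κ l m n p α : Type*} [Fintype ι] [Fintype κ]
    [NonUnitalNonAssocSemiring α] (A : ι → Matrix l m α) (B : κ → Matrix n p α) :
    (∑ i, A i) ⊗ₖ (∑ j, B j) = ∑ i, ∑ j, A i ⊗ₖ B j := by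
  ext ⟨a, b⟩ ⟨c, d⟩
  simp [Matrix.sum_apply, Finset.sum_mul_sum]

lemma inv_ofReal_sqrt_two_mul_self : ((√2 : ℝ) : ℂ)⁻¹ * ((√2 : ℝ) : ℂ)⁻¹ = 2⁻¹ := by
  rw [← mul_inv, ← Complex.ofReal_mul, Real.mul_self_sqrt zero_le_two, Complex.ofReal_ofNat]

lemma proj_apply (v : Fin 2 × Fin 2 → ℂ) (p q : Fin 2 × Fin 2) :
    proj v p q = v p * star (v q) := rfl

lemma trace_proj_mul (v : Fin 2 × Fin 2 → ℂ) (M : Mat4) :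
    (proj v * M).trace = star v ⬝ᵥ (M *ᵥ v) := by
  rw [proj, vecMulVec_mul, trace_vecMulVec, dotProduct_comm, dotProduct_mulVec]

lemma Matrix.PosSemidef.re_trace_proj_mul_nonneg {M : Mat4} (hM : M.PosSemidef)
    (v : Fin 2 × Fin 2 → ℂ) : 0 ≤ (proj v * M).trace.re := by
  rw [trace_proj_mul]
  exact hM.re_dotProduct_nonneg v

lemma trace_ptransB (M : Mat4) : (ptransB M).trace = M.trace := by
  simp [ptransB, Matrix.trace]

lemma trace_ptransB_mul_ptransB (M N : Mat4) :
    (ptransB M * ptransB N).trace = (M * N).trace := by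
  simp only [Matrix.trace, Matrix.diag, Matrix.mul_apply, ptransB, Matrix.of_apply,
    Fintype.sum_prod_type, Fin.sum_univ_two]
  ring

lemma ptransB_proj_PsiP : ptransB (proj PsiP) = (1/2 : ℂ) • 1 - proj PhiM := by
  ext ⟨i, j⟩ ⟨k, l⟩
  fin_cases i <;> fin_cases j <;> fin_cases k <;> fin_cases l <;>
    simp [ptransB, proj_apply, PsiP, PhiM, ket, Complex.conj_ofReal,
      inv_ofReal_sqrt_two_mul_self]

lemma ptransB_proj_PsiM : ptransB (proj PsiM) = (1/2 : ℂ) • 1 - proj PhiP := by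
  ext ⟨i, j⟩ ⟨k, l⟩
  fin_cases i <;> fin_cases j <;> fin_cases k <;> fin_cases l <;>
    simp [ptransB, proj_apply, PsiM, PhiP, ket, Complex.conj_ofReal,
      inv_ofReal_sqrt_two_mul_self]

lemma re_trace_proj_mul_le_of_ptransB_proj {v w : Fin 2 × Fin 2 → ℂ}
    (hvw : ptransB (proj v) = (1/2 : ℂ) • 1 - proj w) {P : Mat4}
    (hP : (ptransB P).PosSemidef) : (proj v * P).trace.re ≤ P.trace.re / 2 := by
  have h : (proj v * P).trace = P.trace / 2 - (proj w * ptransB P).trace := by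
    rw [← trace_ptransB_mul_ptransB, hvw, sub_mul, trace_sub, smul_mul, one_mul, trace_smul,
      trace_ptransB, smul_eq_mul, one_div_mul_eq_div]
  rw [h, sub_re, div_ofNat_re]
  linarith [hP.re_trace_proj_mul_nonneg w]

lemma proj_PsiP_sub_proj_PsiM : proj PsiP - proj PsiM = (1/2 : ℂ) • (PX ⊗ₖ PX + PY ⊗ₖ PY) := by
  ext ⟨i, j⟩ ⟨k, l⟩
  fin_cases i <;> fin_cases j <;> fin_cases k <;> fin_cases l <;>
    norm_num [proj_apply, PsiP, PsiM, ket, PX, PY, Complex.conj_ofReal,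
      inv_ofReal_sqrt_two_mul_self]

lemma sum_omg : ∑ x, omg x = (2 : ℂ) • 1 := by
  simp only [Fintype.sum_prod_type, Fintype.sum_bool, omg, bsign, if_true, if_false,
    Bool.false_eq_true]
  module

lemma sum_tau : ∑ y, tau y = (2 : ℂ) • 1 := by
  simp only [Fintype.sum_prod_type, Fintype.sum_bool, tau, bsign, if_true, if_false,
    Bool.false_eq_true]
  module

lemma sum_omg_kronecker_tau : ∑ x, ∑ y, omg x ⊗ₖ tau y = (4 : ℂ) • 1 := by
  rw [← Matrix.sum_kronecker_sum, sum_omg, sum_tau, smul_kronecker, kronecker_smul,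
    one_kronecker_one, smul_smul]
  norm_num

lemma sum_bsign_smul_omg (a : Bool) : ∑ b, bsign b • omg (a, b) = if a then PY else PX := by
  cases a <;>
    simp only [Fintype.sum_bool, omg, bsign, if_true, if_false, Bool.false_eq_true] <;> module

lemma sum_bsign_smul_tau (c : Bool) :
    ∑ d, bsign d • tau (c, d) = (1 / (√2 : ℂ)) • (PX + bsign c • PY) := by
  cases c <;>
    simp only [Fintype.sum_bool, tau, bsign, if_true, if_false, Bool.false_eq_true] <;> module

lemma bsign_fxy_s9 (a b c d : Bool) :
    bsign (fxy (a, b) (c, d)) = bsign (a && c) * (bsign b * bsign d) := by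
  cases a <;> cases b <;> cases c <;> cases d <;> norm_num [bsign, fxy]

lemma sum_bsign_fxy_smul_kronecker :
    ∑ x, ∑ y, bsign (fxy x y) • (omg x ⊗ₖ tau y) =
      ∑ a, ∑ c, bsign (a && c) •
        ((∑ b, bsign b • omg (a, b)) ⊗ₖ ∑ d, bsign d • tau (c, d)) := by
  simp_rw [Matrix.sum_kronecker_sum, Finset.smul_sum, smul_kronecker, kronecker_smul, smul_smul,
    Fintype.sum_prod_type]
  simp only [bsign_fxy_s9]
  exact Finset.sum_congr rfl fun _ _ => Finset.sum_comm

lemma rho_false_add_rho_true : rho false + rho true = (1/2 : ℂ) • 1 := by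
  have h (b : Bool) (M : Mat4) :
      ((if b = false then M else 0) + if b = true then M else 0) = M := by
    cases b <;> simp
  simp only [rho, ← smul_add, ← Finset.sum_add_distrib, h, sum_omg_kronecker_tau, smul_smul]
  norm_num

lemma rho_false_sub_rho_true :
    rho false - rho true = (1 / (2 * √2 : ℂ)) • (proj PsiP - proj PsiM) := by
  rw [proj_PsiP_sub_proj_PsiM]
  have h (b : Bool) (M : Mat4) :
      ((if b = false then M else 0) - if b = true then M else 0) = bsign b • M := by
    cases b <;> simp [bsign]
  simp only [rho, ← smul_sub, ← Finset.sum_sub_distrib, h]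
  rw [sum_bsign_fxy_smul_kronecker]
  simp only [sum_bsign_smul_omg, sum_bsign_smul_tau]
  simp only [Fintype.sum_bool, bsign, Bool.and_self, Bool.and_false, Bool.false_and, if_true,
    Bool.false_eq_true, if_false, kronecker_add, kronecker_smul, smul_add]
  module

lemma Admissible.trace_add_trace {γ : ℝ} {P0 P1 Pe : Mat4} (h : Admissible γ P0 P1 Pe) :
    P0.trace + P1.trace = 4 * (γ : ℂ) ^ 2 := by
  obtain ⟨-, -, -, hsum, hPe⟩ := h
  have hPe_tr : 4 * Pe.trace = 16 * (1 - (γ : ℂ) ^ 2) := by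
    calc 4 * Pe.trace = ((4 : ℂ) • (1 : Mat4) * Pe).trace := by simp
      _ = ∑ x, ∑ y, ((omg x ⊗ₖ tau y) * Pe).trace := by
        simp_rw [← sum_omg_kronecker_tau, Finset.sum_mul, trace_sum]
      _ = 16 * (1 - (γ : ℂ) ^ 2) := by
        simp only [hPe, Finset.sum_const, Finset.card_univ, Fintype.card_prod, Fintype.card_bool,
          nsmul_eq_mul]
        push_cast
        ring
  have htr := congrArg trace hsum
  rw [trace_add, trace_add, trace_one, Fintype.card_prod, Fintype.card_fin] at htr
  push_cast at htr
  linear_combination htr - hPe_tr / 4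

lemma gval_eq (P0 P1 : Mat4) :
    Gval P0 P1 = (P0.trace.re + P1.trace.re) / 8 +
      ((proj PsiP - proj PsiM) * (P0 - P1)).trace.re / (8 * √2) := by
  have h : (2 : ℂ) • (rho false * P0 + rho true * P1) =
      (rho false + rho true) * (P0 + P1) + (rho false - rho true) * (P0 - P1) := by
    simp only [add_mul, mul_add, sub_mul, mul_sub, two_smul]
    abel
  have htr : (rho false * P0 + rho true * P1).trace =
      (P0.trace + P1.trace) / 4 +
        ((proj PsiP - proj PsiM) * (P0 - P1)).trace / ((4 * √2 : ℝ) : ℂ) := by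
    have := congrArg trace h
    simp only [rho_false_add_rho_true, rho_false_sub_rho_true, smul_mul, one_mul, trace_smul,
      trace_add, smul_eq_mul] at this
    rw [trace_add]
    push_cast
    linear_combination this / 2
  rw [Gval, htr, add_re, div_ofReal_re, div_ofNat_re, add_re]
  ring

lemma re_trace_bell_diff_mul_le {P0 P1 : Mat4} (h0 : IsPPT P0) (h1 : IsPPT P1) :
    ((proj PsiP - proj PsiM) * (P0 - P1)).trace.re ≤ (P0.trace.re + P1.trace.re) / 2 := by
  simp only [sub_mul, mul_sub, trace_sub, sub_re]
  linarith [re_trace_proj_mul_le_of_ptransB_proj ptransB_proj_PsiP h0.2,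
    re_trace_proj_mul_le_of_ptransB_proj ptransB_proj_PsiM h1.2,
    h1.1.re_trace_proj_mul_nonneg PsiP, h0.1.re_trace_proj_mul_nonneg PsiM]

theorem ppt_upper_bound_general (γ : ℝ)
    (P0 P1 Pe : Mat4) (h : Admissible γ P0 P1 Pe)
    (h0 : IsPPT P0) (h1 : IsPPT P1) :
    Gval P0 P1 ≤ γ^2 * (2 + 1/Real.sqrt 2)/4 ∧
    Gval P0 P1 / γ^2 ≤ 1/2 + 1/(4*Real.sqrt 2) := by
  have htr : P0.trace.re + P1.trace.re = 4 * γ ^ 2 := by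
    simpa [← ofReal_pow] using congrArg re h.trace_add_trace
  have hV : Gval P0 P1 ≤ γ ^ 2 * (2 + 1 / √2) / 4 := by
    have hD := re_trace_bell_diff_mul_le h0 h1
    rw [gval_eq, htr]
    calc 4 * γ ^ 2 / 8 + ((proj PsiP - proj PsiM) * (P0 - P1)).trace.re / (8 * √2)
        ≤ 4 * γ ^ 2 / 8 + 2 * γ ^ 2 / (8 * √2) := by gcongr; linarith
      _ = γ ^ 2 * (2 + 1 / √2) / 4 := by field_simp; ring
  refine ⟨hV, div_le_of_le_mul₀ (sq_nonneg γ) (by positivity) ?_⟩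
  calc Gval P0 P1 ≤ γ ^ 2 * (2 + 1 / √2) / 4 := hV
    _ = (1 / 2 + 1 / (4 * √2)) * γ ^ 2 := by field_simp; ring

/-- Theorem 2, upper bound: for every γ ∈ (0,1] and every γ-admissible
PPT triple, V ≤ γ²·(2 + 1/√2)/4, equivalently V/γ² ≤ 1/2 + 1/(4√2). -/
theorem ppt_upper_bound (γ : ℝ) (hγ : 0 < γ) (hγ' : γ ≤ 1)
    (P0 P1 Pe : Mat4) (h : Admissible γ P0 P1 Pe)
    (h0 : IsPPT P0) (h1 : IsPPT P1) (he : IsPPT Pe) :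
    Gval P0 P1 ≤ γ^2 * (2 + 1/Real.sqrt 2)/4 ∧
    Gval P0 P1 / γ^2 ≤ 1/2 + 1/(4*Real.sqrt 2) :=
  ppt_upper_bound_general γ P0 P1 Pe h h0 h1
end
end

section
/- (Theorem 2, achievability by a local strategy.) For every γ ∈ (0,1], set Q_a = γ·(I₂ + (−1)^a X)/2 and R_b = γ·(I₂ + (−1)^b X)/2 for a,b ∈ {0,1}, and define Π₀ = Q₀⊗R₀ + Q₁⊗R₁, Π₁ = Q₀⊗R₁ + Q₁⊗R₀, Π_∅ = I₄ − Π₀ − Π₁. Then (Π₀,Π₁,Π_∅) is a γ-admissible triple, all three elements are PPT, and V = (1/2)·Tr[ρ₀Π₀ + ρ₁Π₁] = γ²·(2 + 1/√2)/4. -/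
open Matrix Complex Kronecker BigOperators ComplexOrder

noncomputable section

/-- local measurement operators Q_a = γ(I + (−1)^a X)/2 -/
def Qloc (γ : ℝ) (a : Bool) : Mat2 := ((γ/2 : ℝ) : ℂ) • ((1 : Mat2) + bsign a • PX)

/-! Q₀ and Q₁ are γ times the spectral projections of X, so Π₀ and Π₁ are γ² times the projections
onto even and odd parity of the outcomes of X ⊗ X. Each is a sum of Kronecker products of positive
matrices, hence PPT, and Π₀ + Π₁ = γ²·I, so Π_∅ = (1 − γ²)·I. For a product state,
Tr[(ω ⊗ τ) Π_c] = γ²(1 + (−1)^c ⟨X⟩_ω ⟨X⟩_τ)/2. Here ⟨X⟩_ω = 0 when x₁ = 1, and when x₁ = 0 the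
sign (−1)^f cancels the sign of ⟨X⟩_ω ⟨X⟩_τ = (−1)^(x₂+y₂)/√2, so half of the 16 terms contribute
γ²(1 + 1/√2)/2 and the other half γ²/2. -/

lemma ptransB_add (M N : Mat4) : ptransB (M + N) = ptransB M + ptransB N := rfl

lemma ptransB_smul (c : ℂ) (M : Mat4) : ptransB (c • M) = c • ptransB M := rfl

lemma ptransB_kronecker (A B : Mat2) : ptransB (A ⊗ₖ B) = A ⊗ₖ Bᵀ := rfl

namespace IsPPT

lemma add {M N : Mat4} (hM : IsPPT M) (hN : IsPPT N) : IsPPT (M + N) :=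
  ⟨hM.1.add hN.1, by rw [ptransB_add]; exact hM.2.add hN.2⟩

lemma smul {M : Mat4} (hM : IsPPT M) {c : ℂ} (hc : 0 ≤ c) : IsPPT (c • M) :=
  ⟨hM.1.smul hc, by rw [ptransB_smul]; exact hM.2.smul hc⟩

end IsPPT

lemma isPPT_kronecker {A B : Mat2} (hA : A.PosSemidef) (hB : B.PosSemidef) : IsPPT (A ⊗ₖ B) :=
  ⟨hA.kronecker hB, by rw [ptransB_kronecker]; exact hA.kronecker hB.transpose⟩

lemma isPPT_one : IsPPT 1 := by
  rw [← one_kronecker_one]; exact isPPT_kronecker .one .one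

lemma Qloc_eq_smul_vecMulVec (γ : ℝ) (a : Bool) :
    Qloc γ a = ((γ / 2 : ℝ) : ℂ) • vecMulVec ![1, bsign a] (star ![1, bsign a]) := by
  ext i j
  fin_cases i <;> fin_cases j <;> cases a <;> simp [Qloc, bsign, PX, vecMulVec]

lemma posSemidef_Qloc {γ : ℝ} (hγ : 0 ≤ γ) (a : Bool) : (Qloc γ a).PosSemidef := by
  rw [Qloc_eq_smul_vecMulVec]
  exact (posSemidef_vecMulVec_self_star _).smul (Complex.zero_le_real.2 (by positivity))

lemma Qloc_false_add_Qloc_true (γ : ℝ) : Qloc γ false + Qloc γ true = (γ : ℂ) • 1 := by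
  ext i j
  fin_cases i <;> fin_cases j <;> simp [Qloc, bsign, PX]

lemma trace_mul_Qloc (M : Mat2) (γ : ℝ) (a : Bool) :
    (M * Qloc γ a).trace = γ / 2 * (M.trace + bsign a * (M * PX).trace) := by
  simp [Qloc, mul_add, trace_add, trace_smul]

def localParity (γ : ℝ) (c : Bool) : Mat4 :=
  Qloc γ false ⊗ₖ Qloc γ c + Qloc γ true ⊗ₖ Qloc γ (!c)

lemma isPPT_localParity {γ : ℝ} (hγ : 0 ≤ γ) (c : Bool) : IsPPT (localParity γ c) :=
  (isPPT_kronecker (posSemidef_Qloc hγ _) (posSemidef_Qloc hγ _)).add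
    (isPPT_kronecker (posSemidef_Qloc hγ _) (posSemidef_Qloc hγ _))

lemma localParity_false_add_true (γ : ℝ) :
    localParity γ false + localParity γ true = ((γ ^ 2 : ℝ) : ℂ) • 1 := by
  have h := congrArg₂ (· ⊗ₖ ·) (Qloc_false_add_Qloc_true γ) (Qloc_false_add_Qloc_true γ)
  simp only [add_kronecker, kronecker_add, smul_kronecker, kronecker_smul, one_kronecker_one,
    smul_smul] at h
  rw [localParity, localParity, Bool.not_false, Bool.not_true, ← sq, ← Complex.ofReal_pow] at *
  rw [← h]; abel

lemma one_sub_localParity (γ : ℝ) :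
    1 - localParity γ false - localParity γ true = ((1 - γ ^ 2 : ℝ) : ℂ) • 1 := by
  rw [sub_sub, localParity_false_add_true, Complex.ofReal_sub, sub_smul, Complex.ofReal_one,
    one_smul]

lemma isPPT_one_sub_localParity {γ : ℝ} (hγ : 0 ≤ γ) (hγ' : γ ≤ 1) :
    IsPPT (1 - localParity γ false - localParity γ true) := by
  rw [one_sub_localParity]
  exact isPPT_one.smul (Complex.zero_le_real.2 (by nlinarith))

lemma trace_kronecker_mul_localParity (A B : Mat2) (γ : ℝ) (c : Bool) :
    ((A ⊗ₖ B) * localParity γ c).trace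
      = γ ^ 2 / 2 * (A.trace * B.trace + bsign c * ((A * PX).trace * (B * PX).trace)) := by
  rw [localParity, mul_add, trace_add, ← mul_kronecker_mul, ← mul_kronecker_mul,
    trace_kronecker, trace_kronecker]
  cases c <;> simp only [trace_mul_Qloc, bsign, Bool.not_false, Bool.not_true] <;> simp <;> ring

lemma trace_omg (x : Bool × Bool) : (omg x).trace = 1 := by
  obtain ⟨_ | _, _ | _⟩ := x <;> simp [omg, PX, PY, bsign, trace, Fin.sum_univ_two] <;> norm_num

lemma trace_tau (y : Bool × Bool) : (tau y).trace = 1 := by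
  obtain ⟨_ | _, _ | _⟩ := y <;> simp [tau, PX, PY, bsign, trace, Fin.sum_univ_two] <;> norm_num

lemma trace_omg_mul_PX (x : Bool × Bool) :
    (omg x * PX).trace = if x.1 then 0 else bsign x.2 := by
  obtain ⟨_ | _, _ | _⟩ := x <;> simp [omg, PX, PY, bsign, add_mul, Fin.sum_univ_two, trace] <;>
    norm_num

lemma trace_tau_mul_PX (y : Bool × Bool) :
    (tau y * PX).trace = bsign y.2 / (Real.sqrt 2 : ℂ) := by
  obtain ⟨_ | _, _ | _⟩ := y <;> simp [tau, PX, PY, bsign, add_mul, Fin.sum_univ_two, trace] <;>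
    ring

lemma bsign_fxy_mul_trace_mul_PX (x y : Bool × Bool) :
    bsign (fxy x y) * ((omg x * PX).trace * (tau y * PX).trace)
      = if x.1 then 0 else 1 / (Real.sqrt 2 : ℂ) := by
  rw [trace_omg_mul_PX, trace_tau_mul_PX]
  obtain ⟨_ | _, _ | _⟩ := x <;> obtain ⟨_ | _, _ | _⟩ := y <;> simp [fxy, bsign] <;> ring

lemma trace_rho_mul_add (P : Bool → Mat4) :
    (rho false * P false + rho true * P true).trace
      = 1 / 8 * ∑ x, ∑ y, ((omg x ⊗ₖ tau y) * P (fxy x y)).trace := by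
  simp only [rho, smul_mul, Matrix.sum_mul, ite_mul, zero_mul, trace_add, trace_smul, trace_sum,
    smul_eq_mul, ← mul_add, ← Finset.sum_add_distrib]
  congr 1
  refine Finset.sum_congr rfl fun x _ => Finset.sum_congr rfl fun y _ => ?_
  cases fxy x y <;> simp

lemma admissible_localParity {γ : ℝ} (hγ : 0 ≤ γ) (hγ' : γ ≤ 1) :
    Admissible γ (localParity γ false) (localParity γ true)
      (1 - localParity γ false - localParity γ true) := by
  refine ⟨(isPPT_localParity hγ false).1, (isPPT_localParity hγ true).1,
    (isPPT_one_sub_localParity hγ hγ').1, by abel, fun x y => ?_⟩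
  rw [one_sub_localParity, Matrix.mul_smul, mul_one, trace_smul, trace_kronecker, trace_omg,
    trace_tau]
  simp

lemma Gval_localParity (γ : ℝ) :
    Gval (localParity γ false) (localParity γ true) = γ ^ 2 * (2 + 1 / Real.sqrt 2) / 4 := by
  rw [Gval, trace_rho_mul_add (localParity γ)]
  simp only [trace_kronecker_mul_localParity, trace_omg, trace_tau, bsign_fxy_mul_trace_mul_PX]
  simp [Fintype.sum_prod_type, ← Complex.ofReal_pow]
  field_simp
  linear_combination 32 * γ ^ 2 * Real.sq_sqrt zero_le_two

/-- Theorem 2, achievability by a local strategy. -/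
theorem ppt_achievable (γ : ℝ) (hγ : 0 < γ) (hγ' : γ ≤ 1) :
    Admissible γ
      (Qloc γ false ⊗ₖ Qloc γ false + Qloc γ true ⊗ₖ Qloc γ true)
      (Qloc γ false ⊗ₖ Qloc γ true + Qloc γ true ⊗ₖ Qloc γ false)
      (1 - (Qloc γ false ⊗ₖ Qloc γ false + Qloc γ true ⊗ₖ Qloc γ true)
         - (Qloc γ false ⊗ₖ Qloc γ true + Qloc γ true ⊗ₖ Qloc γ false)) ∧
    IsPPT (Qloc γ false ⊗ₖ Qloc γ false + Qloc γ true ⊗ₖ Qloc γ true) ∧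
    IsPPT (Qloc γ false ⊗ₖ Qloc γ true + Qloc γ true ⊗ₖ Qloc γ false) ∧
    IsPPT (1 - (Qloc γ false ⊗ₖ Qloc γ false + Qloc γ true ⊗ₖ Qloc γ true)
         - (Qloc γ false ⊗ₖ Qloc γ true + Qloc γ true ⊗ₖ Qloc γ false)) ∧
    Gval (Qloc γ false ⊗ₖ Qloc γ false + Qloc γ true ⊗ₖ Qloc γ true)
         (Qloc γ false ⊗ₖ Qloc γ true + Qloc γ true ⊗ₖ Qloc γ false)
      = γ^2 * (2 + 1/Real.sqrt 2)/4 :=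
  ⟨admissible_localParity hγ.le hγ', isPPT_localParity hγ.le false, isPPT_localParity hγ.le true,
    isPPT_one_sub_localParity hγ.le hγ', Gval_localParity γ⟩
end
end
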